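/- arXiv:1606.05317 — 3 statements merged into one kernel-verified Lean document; each statement's English description precedes it below -/
import Mathlib

section
/- Let (I_j)_{j≥0} be independent Bernoulli random variables with P(I_j = 1) = 1/(j+2), and τ_n = Σ_{j=0}^{n-1} I_j. Then τ_n / log n → 1 almost surely as n → ∞. -/
/-!
Write `a n = ∑_{j<n} 1/(j+2) = H_{n+1} - 1`, the mean of `τ n`; it is asymptotic to `log n`.
Since the `I j` are independent indicators, `Var (τ n) ≤ a n`, so Chebyshev bounds
`P(|τ n / a n - 1| ≥ ε)` by `1 / (ε² a n)`. Along indices `s k` with `a (s k) ≈ (k+1)²` these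
bounds are summable, and Borel–Cantelli gives `τ (s k) / a (s k) → 1` almost surely. Because
`a (s (k+1)) / a (s k) → 1` and `τ` is monotone, the convergence passes to the whole sequence.
-/

open MeasureTheory ProbabilityTheory Finset Filter Topology Asymptotics

theorem exists_tendsto_atTop_forall_mem_Ico_of_tendsto_atTop {s : ℕ → ℕ}
    (hs : Tendsto s atTop atTop) :
    ∃ idx : ℕ → ℕ, Tendsto idx atTop atTop ∧
      ∀ n, s 0 ≤ n → n ∈ Set.Ico (s (idx n)) (s (idx n + 1)) := by
  have hex (n : ℕ) : ∃ k, n < s k := (hs.eventually_gt_atTop n).exists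
  refine ⟨fun n => Nat.find (hex n) - 1, tendsto_atTop.2 fun K => ?_, fun n hn => ?_⟩
  · filter_upwards [eventually_ge_atTop ((range (K + 1)).sup s)] with n hn
    have : K < Nat.find (hex n) := (Nat.lt_find_iff _ _).2 fun m hm =>
      not_lt.2 ((le_sup (mem_range.2 (by omega))).trans hn)
    omega
  · have hpos : Nat.find (hex n) ≠ 0 := fun h => by
      have := Nat.find_spec (hex n)
      rw [h] at this
      omega
    refine ⟨not_lt.1 (Nat.find_min (hex n) (Nat.sub_one_lt hpos)), ?_⟩
    rw [Nat.sub_add_cancel (Nat.pos_of_ne_zero hpos)]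
    exact Nat.find_spec (hex n)

theorem tendsto_div_of_monotone_of_tendsto_div_subseq {t a : ℕ → ℝ} {s : ℕ → ℕ}
    (ht : Monotone t) (ht₀ : 0 ≤ t) (ha : Monotone a) (hs : Tendsto s atTop atTop)
    (has : ∀ k, 0 < a (s k))
    (hratio : Tendsto (fun k => a (s (k + 1)) / a (s k)) atTop (𝓝 1))
    (hsub : Tendsto (fun k => t (s k) / a (s k)) atTop (𝓝 1)) :
    Tendsto (fun n => t n / a n) atTop (𝓝 1) := by
  obtain ⟨idx, idx_tendsto, idx_mem⟩ := exists_tendsto_atTop_forall_mem_Ico_of_tendsto_atTop hs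
  have hlow : Tendsto (fun k => t (s k) / a (s (k + 1))) atTop (𝓝 1) := by
    refine (div_one (1 : ℝ) ▸ hsub.div hratio one_ne_zero).congr fun k => ?_
    have := (has k).ne'
    simp only [Pi.div_apply]
    field_simp
  have hupp : Tendsto (fun k => t (s (k + 1)) / a (s k)) atTop (𝓝 1) := by
    refine (mul_one (1 : ℝ) ▸ (hsub.comp (tendsto_add_atTop_nat 1)).mul hratio).congr fun k => ?_
    have := (has (k + 1)).ne'
    simp only [Function.comp_apply]
    field_simp
  refine tendsto_of_tendsto_of_tendsto_of_le_of_le' (hlow.comp idx_tendsto)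
    (hupp.comp idx_tendsto) ?_ ?_ <;>
  filter_upwards [eventually_ge_atTop (s 0)] with n hn <;>
  obtain ⟨hleft, hright⟩ := idx_mem n hn <;>
  have han : 0 < a n := (has _).trans_le (ha hleft)
  · calc t (s (idx n)) / a (s (idx n + 1)) ≤ t n / a (s (idx n + 1)) := by
          gcongr
          · exact (has _).le
          · exact ht hleft
      _ ≤ t n / a n := by
          gcongr
          · exact ht₀ n
          · exact ha hright.le
  · calc t n / a n ≤ t (s (idx n + 1)) / a n := by gcongr; exact ht hright.le
      _ ≤ t (s (idx n + 1)) / a (s (idx n)) := by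
          gcongr
          · exact ht₀ _
          · exact has _
          · exact ha hleft

theorem exists_subseq_sq_le_and_tendsto_ratio_one {a : ℕ → ℝ} (ha : Monotone a) (ha₀ : a 0 < 1)
    (hstep : ∀ n, a (n + 1) ≤ a n + 1) (htop : Tendsto a atTop atTop) :
    ∃ s : ℕ → ℕ, Tendsto s atTop atTop ∧ (∀ k : ℕ, ((k : ℝ) + 1) ^ 2 ≤ a (s k)) ∧
      Tendsto (fun k : ℕ => a (s (k + 1)) / a (s k)) atTop (𝓝 1) := by
  have hex (k : ℕ) : ∃ n, ((k : ℝ) + 1) ^ 2 ≤ a n := (htop.eventually_ge_atTop _).exists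
  let s (k : ℕ) : ℕ := Nat.find (hex k)
  have hlow (k : ℕ) : ((k : ℝ) + 1) ^ 2 ≤ a (s k) := Nat.find_spec (hex k)
  have hupp (k : ℕ) : a (s k) ≤ ((k : ℝ) + 1) ^ 2 + 1 := by
    obtain ⟨n, hn⟩ : ∃ n, s k = n + 1 := Nat.exists_eq_succ_of_ne_zero fun h => by
      have := hlow k
      rw [h] at this
      nlinarith [k.cast_nonneg (α := ℝ)]
    have := Nat.find_min (hex k) (show n < s k by omega)
    rw [hn]
    linarith [hstep n]
  have hpos (k : ℕ) : 0 < a (s k) := lt_of_lt_of_le (by positivity) (hlow k)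
  refine ⟨s, tendsto_atTop.2 fun N => ?_, hlow, ?_⟩
  · filter_upwards [tendsto_natCast_atTop_atTop.eventually_gt_atTop (a N)] with k hk
    exact (ha.reflect_lt (by nlinarith [hlow k])).le
  · have hbound : Tendsto (fun k : ℕ => 1 + 4 * (1 / ((k : ℝ) + 1))) atTop (𝓝 1) := by
      simpa using ((tendsto_one_div_add_atTop_nhds_zero_nat (𝕜 := ℝ)).const_mul 4).const_add 1
    refine tendsto_of_tendsto_of_tendsto_of_le_of_le tendsto_const_nhds hbound
      (fun k => ?_) (fun k => ?_)
    · rw [le_div_iff₀ (hpos k), one_mul]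
      have := hlow (k + 1)
      push_cast at this
      nlinarith [hupp k, k.cast_nonneg (α := ℝ)]
    · rw [div_le_iff₀ (hpos k)]
      have := hupp (k + 1)
      push_cast at this
      have hk : (0 : ℝ) ≤ k := k.cast_nonneg
      calc a (s (k + 1)) ≤ ((k : ℝ) + 1) ^ 2 + 4 * (k + 1) := by nlinarith
        _ = (1 + 4 * (1 / ((k : ℝ) + 1))) * ((k : ℝ) + 1) ^ 2 := by field_simp
        _ ≤ _ := by gcongr; exact hlow k

theorem sum_range_one_div_add_two_eq_harmonic (n : ℕ) :
    ∑ j ∈ range n, 1 / ((j : ℝ) + 2) = harmonic (n + 1) - 1 := by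
  induction n with
  | zero => simp
  | succ n ih =>
    rw [sum_range_succ, ih, harmonic_succ (n + 1)]
    push_cast
    ring

theorem tendsto_sum_range_one_div_add_two_sub_log :
    Tendsto (fun n : ℕ => ∑ j ∈ range n, 1 / ((j : ℝ) + 2) - Real.log n) atTop
      (𝓝 (Real.eulerMascheroniConstant - 1)) := by
  have hH := Real.tendsto_harmonic_sub_log.comp (tendsto_add_atTop_nat 1)
  have hlog := (Real.tendsto_log_comp_add_sub_log 1).comp tendsto_natCast_atTop_atTop
  convert (hH.sub_const 1).add hlog using 1
  · ext n
    simp only [sum_range_one_div_add_two_eq_harmonic, Function.comp_apply]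
    push_cast
    ring
  · rw [add_zero]

theorem tendsto_sum_range_one_div_add_two_atTop :
    Tendsto (fun n : ℕ => ∑ j ∈ range n, 1 / ((j : ℝ) + 2)) atTop atTop :=
  ((Real.tendsto_log_atTop.comp tendsto_natCast_atTop_atTop).atTop_add
    tendsto_sum_range_one_div_add_two_sub_log).congr fun n => by simp

theorem tendsto_sum_range_one_div_add_two_div_log :
    Tendsto (fun n : ℕ => (∑ j ∈ range n, 1 / ((j : ℝ) + 2)) / Real.log n) atTop (𝓝 1) := by
  have hlog := Real.tendsto_log_atTop.comp tendsto_natCast_atTop_atTop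
  have hequiv : (fun n : ℕ => ∑ j ∈ range n, 1 / ((j : ℝ) + 2)) ~[atTop] fun n => Real.log n :=
    tendsto_sum_range_one_div_add_two_sub_log.isBigO_one ℝ |>.trans_isLittleO <|
      (isLittleO_one_left_iff ℝ).2 (tendsto_norm_atTop_atTop.comp hlog)
  exact (isEquivalent_iff_tendsto_one (hlog.eventually_ne_atTop 0)).1 hequiv

section Probability

variable {Ω : Type*} [MeasurableSpace Ω] {μ : Measure Ω}

theorem ae_tendsto_of_forall_tsum_meas_le_abs_sub_ne_top {X : ℕ → Ω → ℝ} {c : ℝ}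
    (h : ∀ ε > 0, ∑' k, μ {ω | ε ≤ |X k ω - c|} ≠ ⊤) :
    ∀ᵐ ω ∂μ, Tendsto (fun k => X k ω) atTop (𝓝 c) := by
  have hclose (m : ℕ) : ∀ᵐ ω ∂μ, ∀ᶠ k in atTop, |X k ω - c| < 1 / ((m : ℝ) + 1) :=
    (ae_eventually_notMem (h _ Nat.one_div_pos_of_nat)).mono fun _ hω =>
      hω.mono fun _ hk => not_le.1 hk
  filter_upwards [ae_all_iff.2 hclose] with ω hω
  refine Metric.tendsto_atTop.2 fun ε hε => ?_
  obtain ⟨m, hm⟩ := exists_nat_one_div_lt hε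
  obtain ⟨N, hN⟩ := (hω m).exists_forall_of_atTop
  exact ⟨N, fun k hk => (hN k hk).trans hm⟩

theorem meas_le_abs_div_integral_sub_one_le [IsFiniteMeasure μ] {S : Ω → ℝ} (hS : MemLp S 2 μ)
    (hpos : 0 < μ[S]) (hvar : variance S μ ≤ μ[S]) {ε : ℝ} (hε : 0 < ε) :
    μ {ω | ε ≤ |S ω / μ[S] - 1|} ≤ ENNReal.ofReal (1 / (ε ^ 2 * μ[S])) := by
  have hset : {ω | ε ≤ |S ω / μ[S] - 1|} = {ω | ε * μ[S] ≤ |S ω - μ[S]|} := by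
    ext ω
    rw [Set.mem_ofPred_eq, Set.mem_ofPred_eq, div_sub_one hpos.ne', abs_div, abs_of_pos hpos,
      le_div_iff₀ hpos]
  rw [hset]
  refine (meas_ge_le_variance_div_sq hS (mul_pos hε hpos)).trans (ENNReal.ofReal_le_ofReal ?_)
  calc variance S μ / (ε * μ[S]) ^ 2 ≤ μ[S] / (ε * μ[S]) ^ 2 := by gcongr
    _ = 1 / (ε ^ 2 * μ[S]) := by field_simp

theorem ae_tendsto_div_integral_of_variance_le_of_sq_le [IsFiniteMeasure μ] {S : ℕ → Ω → ℝ}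
    (hS : ∀ k, MemLp (S k) 2 μ) (hvar : ∀ k, variance (S k) μ ≤ μ[S k])
    (hsq : ∀ k : ℕ, ((k : ℝ) + 1) ^ 2 ≤ μ[S k]) :
    ∀ᵐ ω ∂μ, Tendsto (fun k => S k ω / μ[S k]) atTop (𝓝 1) := by
  refine ae_tendsto_of_forall_tsum_meas_le_abs_sub_ne_top fun ε hε => ?_
  have hbound (k : ℕ) : μ {ω | ε ≤ |S k ω / μ[S k] - 1|} ≤
      ENNReal.ofReal (1 / ε ^ 2 * (1 / ((k : ℝ) + 1) ^ 2)) := by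
    refine (meas_le_abs_div_integral_sub_one_le (hS k) (lt_of_lt_of_le (by positivity) (hsq k))
      (hvar k) hε).trans (ENNReal.ofReal_le_ofReal ?_)
    rw [← one_div_mul_one_div]
    gcongr
    exact hsq k
  have hsum : Summable fun k : ℕ => 1 / ε ^ 2 * (1 / ((k : ℝ) + 1) ^ 2) := by
    refine Summable.mul_left _ ?_
    exact_mod_cast (summable_nat_add_iff 1).2 (Real.summable_one_div_nat_pow.2 one_lt_two)
  refine ne_top_of_le_ne_top ?_ (ENNReal.tsum_le_tsum hbound)
  rw [← ENNReal.ofReal_tsum_of_nonneg (fun k => by positivity) hsum]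
  exact ENNReal.ofReal_ne_top

section ZeroOne

variable {X : Ω → ℝ}

theorem memLp_of_zero_one [IsFiniteMeasure μ] (hX : AEStronglyMeasurable X μ)
    (h01 : ∀ ω, X ω = 0 ∨ X ω = 1) (p : ENNReal) : MemLp X p μ :=
  MemLp.of_bound hX 1 (ae_of_all _ fun ω => by rcases h01 ω with h | h <;> simp [h])

theorem integral_eq_measureReal_of_zero_one (hX : Measurable X) (h01 : ∀ ω, X ω = 0 ∨ X ω = 1) :
    μ[X] = μ.real {ω | X ω = 1} := by
  have hind : X = {ω | X ω = 1}.indicator 1 := by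
    ext ω
    rcases h01 ω with h | h <;> simp [Set.indicator, h]
  conv_lhs => rw [hind]
  exact integral_indicator_one (hX (measurableSet_singleton 1))

theorem integral_le_one_of_zero_one [IsProbabilityMeasure μ] (hX : AEStronglyMeasurable X μ)
    (h01 : ∀ ω, X ω = 0 ∨ X ω = 1) : μ[X] ≤ 1 := by
  have hle (ω : Ω) : X ω ≤ 1 := by rcases h01 ω with h | h <;> simp [h]
  simpa using integral_mono ((memLp_of_zero_one hX h01 1).integrable le_rfl)
    (integrable_const 1) hle

theorem variance_le_integral_of_zero_one [IsProbabilityMeasure μ] (hX : AEStronglyMeasurable X μ)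
    (h01 : ∀ ω, X ω = 0 ∨ X ω = 1) : variance X μ ≤ μ[X] := by
  have hsq : X ^ 2 = X := by
    ext ω
    rcases h01 ω with h | h <;> simp [h]
  rw [variance_eq_sub (memLp_of_zero_one hX h01 2), hsq]
  linarith [sq_nonneg μ[X]]

end ZeroOne

theorem ae_tendsto_sum_div_sum_integral_of_zero_one [IsProbabilityMeasure μ] {I : ℕ → Ω → ℝ}
    (hmeas : ∀ j, AEStronglyMeasurable (I j) μ) (h01 : ∀ j ω, I j ω = 0 ∨ I j ω = 1)
    (hindep : Pairwise fun i j => IndepFun (I i) (I j) μ)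
    (hdiv : Tendsto (fun n => ∑ j ∈ range n, μ[I j]) atTop atTop) :
    ∀ᵐ ω ∂μ, Tendsto (fun n => (∑ j ∈ range n, I j ω) / ∑ j ∈ range n, μ[I j]) atTop (𝓝 1) := by
  set a : ℕ → ℝ := fun n => ∑ j ∈ range n, μ[I j]
  have hI_nonneg (j : ℕ) (ω : Ω) : 0 ≤ I j ω := by rcases h01 j ω with h | h <;> simp [h]
  have hI_mem (j : ℕ) : MemLp (I j) 2 μ := memLp_of_zero_one (hmeas j) (h01 j) 2
  have ha : Monotone a := monotone_nat_of_le_succ fun n => by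
    simpa [a, sum_range_succ] using integral_nonneg (hI_nonneg n)
  have hstep (n : ℕ) : a (n + 1) ≤ a n + 1 := by
    simpa [a, sum_range_succ] using integral_le_one_of_zero_one (hmeas n) (h01 n)
  obtain ⟨s, hs, hsq, hratio⟩ :=
    exists_subseq_sq_le_and_tendsto_ratio_one ha (by simp [a]) hstep hdiv
  have hS_int (n : ℕ) : μ[∑ j ∈ range n, I j] = a n := by
    simp only [Finset.sum_apply]
    exact integral_finsetSum _ fun j _ => (hI_mem j).integrable one_le_two
  have hS_var (n : ℕ) : variance (∑ j ∈ range n, I j) μ ≤ μ[∑ j ∈ range n, I j] := by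
    rw [IndepFun.variance_sum (fun j _ => hI_mem j) fun i _ j _ hij => hindep hij, hS_int]
    exact sum_le_sum fun j _ => variance_le_integral_of_zero_one (hmeas j) (h01 j)
  have hsub := ae_tendsto_div_integral_of_variance_le_of_sq_le
    (fun k => memLp_finsetSum' (range (s k)) fun j _ => hI_mem j) (fun k => hS_var (s k))
    (fun k => hS_int (s k) ▸ hsq k)
  filter_upwards [hsub] with ω hω
  simp only [hS_int] at hω
  simp only [Finset.sum_apply] at hω
  refine tendsto_div_of_monotone_of_tendsto_div_subseq ?_
    (fun n => sum_nonneg fun j _ => hI_nonneg j ω) ha hs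
    (fun k => lt_of_lt_of_le (by positivity) (hsq k)) hratio hω
  exact monotone_nat_of_le_succ fun n => by simpa [sum_range_succ] using hI_nonneg n ω

end Probability

/-- For independent Bernoulli variables `I j` with success
probability `1/(j+2)` and `τ n = ∑_{j<n} I j`, one has `τ n / log n → 1`
almost surely as `n → ∞`. -/
theorem tau_over_log_tendsto_one_ae
    {Ω : Type*} [MeasurableSpace Ω] (μ : Measure Ω) [IsProbabilityMeasure μ]
    (I : ℕ → Ω → ℝ) (hmeas : ∀ j, Measurable (I j))
    (h01 : ∀ j ω, I j ω = 0 ∨ I j ω = 1)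
    (hber : ∀ j, μ {ω | I j ω = 1} = ENNReal.ofReal (1 / (j + 2 : ℝ)))
    (hindep : iIndepFun I μ)
    (τ : ℕ → Ω → ℝ) (hτ : ∀ n ω, τ n ω = ∑ j ∈ range n, I j ω) :
    ∀ᵐ ω ∂μ, Tendsto (fun n : ℕ => τ n ω / Real.log n) atTop (nhds 1) := by
  have hmean (j : ℕ) : μ[I j] = 1 / (j + 2 : ℝ) := by
    rw [integral_eq_measureReal_of_zero_one (hmeas j) (h01 j), measureReal_def, hber j,
      ENNReal.toReal_ofReal (by positivity)]
  have hdiv : Tendsto (fun n => ∑ j ∈ range n, μ[I j]) atTop atTop := by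
    simpa only [hmean] using tendsto_sum_range_one_div_add_two_atTop
  filter_upwards [ae_tendsto_sum_div_sum_integral_of_zero_one
    (fun j => (hmeas j).aestronglyMeasurable) h01 (fun _ _ hij => hindep.indepFun hij) hdiv]
    with ω hω
  simp only [hmean] at hω
  refine (mul_one (1 : ℝ) ▸ hω.mul tendsto_sum_range_one_div_add_two_div_log).congr' ?_
  filter_upwards [tendsto_sum_range_one_div_add_two_atTop.eventually_gt_atTop 0] with n hn
  rw [hτ, div_mul_div_cancel₀ hn.ne']
end

section
/- Let Z_n be the (n+1)-th color drawn in the balanced urn model with color set S, initial distribution U_0 ∈ 𝒫(S), and replacement kernel R. Let (X_n)_{n≥0} be the Markov chain on S with transition kernel R and initial distribution U_0, and let τ_n be the depth-minus-one of vertex n in an independent random recursive tree (a sum of independent Bernoulli(1/(j+2)) indicators, j = 0, …, n−1). Then Z_n has the same distribution as X_{τ_n}. -/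
/-!
Both laws `ν n` satisfy `(n + 2) • ν (n + 1) = (n + 1) • ν n + κ ∘ₘ ν n` with `ν 0 = u0`, and
this recursion determines them. For the urn, `(n + 1) • law (Z n)` is the mean measure of `U n`,
which grows by `κ ∘ₘ law (Z n)` at each step. For the chain, independence of `τ n` gives
`law (X (τ n)) = L ∘ₘ law (τ n)` with `L k = law (X k)`; as `τ (n + 1) = τ n + I n` with `I n` an
independent Bernoulli(1/(n+2)) variable, `(n + 2) • law (τ (n + 1))` is `(n + 1) • law (τ n)` plus
the law of `τ n + 1`, and `L (k + 1) = κ ∘ₘ L k` turns that shift into the `κ ∘ₘ` term.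
-/

open MeasureTheory ProbabilityTheory Finset
open scoped ENNReal

section

variable {S : Type*} [MeasurableSpace S] {Ω : Type*} [MeasurableSpace Ω] {μ : Measure Ω}

def SatisfiesUrnRecursion (κ : Kernel S S) (ν : ℕ → Measure S) : Prop :=
  ∀ n : ℕ, ((n : ℝ≥0∞) + 2) • ν (n + 1) = ((n : ℝ≥0∞) + 1) • ν n + κ ∘ₘ ν n

theorem SatisfiesUrnRecursion.unique {κ : Kernel S S} {ν ν' : ℕ → Measure S}
    (hν : SatisfiesUrnRecursion κ ν) (hν' : SatisfiesUrnRecursion κ ν') (h0 : ν 0 = ν' 0) :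
    ν = ν' := by
  funext n
  induction n with
  | zero => exact h0
  | succ n ih =>
    have h := hν n
    rw [ih, ← hν' n] at h
    have hc : ((n : ℝ≥0∞) + 2)⁻¹ * ((n : ℝ≥0∞) + 2) = 1 :=
      ENNReal.inv_mul_cancel (by positivity) (by finiteness)
    simpa [smul_smul, hc] using congrArg (((n : ℝ≥0∞) + 2)⁻¹ • ·) h

theorem satisfiesUrnRecursion_map_draw {κ : Kernel S S} {Z : ℕ → Ω → S}
    (hZ : ∀ n, Measurable (Z n)) {U : ℕ → Ω → Measure S}
    (hU : ∀ n ω, U (n + 1) ω = U n ω + κ (Z n ω))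
    (hdraw : ∀ n : ℕ, ∀ A, MeasurableSet A →
      μ (Z n ⁻¹' A) = ∫⁻ ω, U n ω A / (n + 1 : ℝ≥0∞) ∂μ) :
    SatisfiesUrnRecursion κ (fun n => μ.map (Z n)) := by
  have hmean : ∀ (n : ℕ) A, MeasurableSet A →
      ((n : ℝ≥0∞) + 1) * μ.map (Z n) A = ∫⁻ ω, U n ω A ∂μ := by
    intro n A hA
    rw [Measure.map_apply (hZ n) hA, hdraw n A hA]
    simp_rw [div_eq_mul_inv]
    rw [lintegral_mul_const' _ _ (by simp), mul_comm, mul_assoc,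
      ENNReal.inv_mul_cancel (by simp) (by finiteness), mul_one]
  intro n
  ext A hA
  have hn : ((n + 1 : ℕ) : ℝ≥0∞) + 1 = (n : ℝ≥0∞) + 2 := by push_cast; ring
  simp only [Measure.smul_apply, Measure.add_apply, smul_eq_mul]
  rw [← hn, hmean (n + 1) A hA, hmean n A hA, Measure.bind_apply hA κ.aemeasurable,
    lintegral_map (κ.measurable_coe hA) (hZ n)]
  simp_rw [hU, Measure.add_apply]
  exact lintegral_add_right _ ((κ.measurable_coe hA).comp (hZ n))

theorem map_succ_eq_comp_map {κ : Kernel S S} {X : ℕ → Ω → S} (hX : ∀ k, Measurable (X k))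
    (hstep : ∀ k : ℕ, ∀ A, MeasurableSet A → μ (X (k + 1) ⁻¹' A) = ∫⁻ ω, κ (X k ω) A ∂μ)
    (k : ℕ) : μ.map (X (k + 1)) = κ ∘ₘ μ.map (X k) := by
  ext A hA
  rw [Measure.map_apply (hX (k + 1)) hA, Measure.bind_apply hA κ.aemeasurable,
    lintegral_map (κ.measurable_coe hA) (hX k), hstep k A hA]

theorem map_eval_eq_comp_of_indepFun {X : ℕ → Ω → S} (hX : ∀ k, Measurable (X k))
    {T : Ω → ℕ} (hT : Measurable T) (hXT : ∀ k, IndepFun (X k) T μ) :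
    μ.map (fun ω => X (T ω) ω) = Kernel.ofFunOfCountable (fun k => μ.map (X k)) ∘ₘ μ.map T := by
  have hmeas : Measurable fun ω => X (T ω) ω :=
    (measurable_from_prod_countable_left (f := fun p : Ω × ℕ => X p.2 p.1) hX).comp
      (measurable_id.prodMk hT)
  ext A hA
  have hfiber : (fun ω => X (T ω) ω) ⁻¹' A = ⋃ k, T ⁻¹' {k} ∩ X k ⁻¹' A := by
    ext ω; simp [eq_comm]
  rw [Measure.map_apply hmeas hA, Measure.bind_apply hA (Kernel.aemeasurable _),
    lintegral_countable', hfiber, measure_iUnion]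
  · refine tsum_congr fun k => ?_
    rw [(hXT k).symm.measure_inter_preimage_eq_mul _ _ (measurableSet_singleton k) hA,
      Measure.map_apply hT (measurableSet_singleton k), mul_comm, ← Measure.map_apply (hX k) hA]
    rfl
  · exact fun i j hij => ((Set.disjoint_singleton.2 hij).preimage T).mono
      Set.inter_subset_left Set.inter_subset_left
  · exact fun k => (hT (measurableSet_singleton k)).inter (hX k hA)

theorem map_add_eq_of_indepFun_of_zero_or_one {T B : Ω → ℕ} (hT : Measurable T)
    (hB : Measurable B) (hB01 : ∀ ω, B ω = 0 ∨ B ω = 1) (hTB : IndepFun T B μ) :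
    μ.map (fun ω => T ω + B ω) =
      μ (B ⁻¹' {0}) • μ.map T + μ (B ⁻¹' {1}) • (μ.map T).map (· + 1) := by
  ext s hs
  have hsplit : (fun ω => T ω + B ω) ⁻¹' s =
      (T ⁻¹' s ∩ B ⁻¹' {0}) ∪ (T ⁻¹' ((· + 1) ⁻¹' s) ∩ B ⁻¹' {1}) := by
    ext ω
    rcases hB01 ω with h | h <;> simp [h]
  have hdisj : Disjoint (T ⁻¹' s ∩ B ⁻¹' {0}) (T ⁻¹' ((· + 1) ⁻¹' s) ∩ B ⁻¹' {1}) :=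
    ((Set.disjoint_singleton.2 zero_ne_one).preimage B).mono
      Set.inter_subset_right Set.inter_subset_right
  rw [Measure.map_apply (by fun_prop : Measurable fun ω => T ω + B ω) hs, hsplit,
    measure_union hdisj ((hT .of_discrete).inter (hB .of_discrete)),
    hTB.measure_inter_preimage_eq_mul _ _ hs (measurableSet_singleton 0),
    hTB.measure_inter_preimage_eq_mul _ _ (measurable_of_countable _ hs)
      (measurableSet_singleton 1)]
  simp [Measure.map_apply hT hs, Measure.map_apply (measurable_of_countable _) hs,
    Measure.map_apply hT (measurable_of_countable _ hs), mul_comm]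

theorem smul_map_sum_range_succ [IsProbabilityMeasure μ] {I : ℕ → Ω → ℕ}
    (hI : ∀ j, Measurable (I j)) (hI01 : ∀ j ω, I j ω = 0 ∨ I j ω = 1)
    (hber : ∀ j, μ {ω | I j ω = 1} = ENNReal.ofReal (1 / (j + 2 : ℝ)))
    (hindep : iIndepFun I μ) (n : ℕ) :
    ((n : ℝ≥0∞) + 2) • μ.map (fun ω => ∑ j ∈ range (n + 1), I j ω) =
      ((n : ℝ≥0∞) + 1) • μ.map (fun ω => ∑ j ∈ range n, I j ω) +
        (μ.map (fun ω => ∑ j ∈ range n, I j ω)).map (· + 1) := by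
  have hc : ((n : ℝ≥0∞) + 2) * ((n : ℝ≥0∞) + 2)⁻¹ = 1 :=
    ENNReal.mul_inv_cancel (by positivity) (by finiteness)
  have hone : μ (I n ⁻¹' {1}) = ((n : ℝ≥0∞) + 2)⁻¹ := by
    change μ {ω | I n ω = 1} = _
    rw [hber n, one_div, ENNReal.ofReal_inv_of_pos (by positivity),
      ENNReal.ofReal_add (by positivity) (by positivity), ENNReal.ofReal_natCast]
    norm_num
  have hzero : μ (I n ⁻¹' {0}) = 1 - ((n : ℝ≥0∞) + 2)⁻¹ := by
    have hcompl : I n ⁻¹' {0} = (I n ⁻¹' {1})ᶜ := by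
      ext ω; rcases hI01 n ω with h | h <;> simp [h]
    rw [hcompl, prob_compl_eq_one_sub (hI n (measurableSet_singleton 1)), hone]
  have hTI : IndepFun (fun ω => ∑ j ∈ range n, I j ω) (I n) μ := by
    simpa [← Finset.sum_fn] using hindep.indepFun_sum_range_succ hI n
  simp_rw [Finset.sum_range_succ]
  rw [map_add_eq_of_indepFun_of_zero_or_one (by fun_prop) (hI n) (hI01 n) hTI, smul_add,
    smul_smul, smul_smul, hone, hzero, hc, one_smul, ENNReal.mul_sub (by simp), hc, mul_one,
    show (n : ℝ≥0∞) + 2 = (n + 1) + 1 by ring, ENNReal.add_sub_cancel_right ENNReal.one_ne_top]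

theorem satisfiesUrnRecursion_comp {κ : Kernel S S} {L : Kernel ℕ S}
    (hL : ∀ k, L (k + 1) = κ ∘ₘ L k) {ρ : ℕ → Measure ℕ}
    (hρ : ∀ n : ℕ, ((n : ℝ≥0∞) + 2) • ρ (n + 1) = ((n : ℝ≥0∞) + 1) • ρ n + (ρ n).map (· + 1)) :
    SatisfiesUrnRecursion κ (fun n => L ∘ₘ ρ n) := by
  have hshift : Kernel.comap L (· + 1) (measurable_of_countable _) = κ ∘ₖ L := by
    ext k : 1
    rw [Kernel.comap_apply, hL, Kernel.comp_apply]
  intro n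
  calc ((n : ℝ≥0∞) + 2) • (L ∘ₘ ρ (n + 1))
      = L ∘ₘ (((n : ℝ≥0∞) + 1) • ρ n + (ρ n).map (· + 1)) := by
        rw [← Measure.comp_smul, hρ]
    _ = ((n : ℝ≥0∞) + 1) • (L ∘ₘ ρ n) + κ ∘ₘ (L ∘ₘ ρ n) := by
        rw [Measure.comp_add, Measure.comp_smul,
          ← Measure.deterministic_comp_eq_map (measurable_of_countable _), Measure.comp_assoc,
          Kernel.comp_deterministic_eq_comap, hshift, Measure.comp_assoc]

end

theorem marginal_representation_general
    {S : Type*} [MeasurableSpace S]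
    (κ : Kernel S S)
    (u0 : Measure S)
    -- the urn process
    {Ω : Type*} [MeasurableSpace Ω] (μ : Measure Ω) [IsProbabilityMeasure μ]
    (Z : ℕ → Ω → S) (hZmeas : ∀ n, Measurable (Z n))
    (U : ℕ → Ω → Measure S)
    (hU0 : ∀ ω, U 0 ω = u0)
    (hUrec : ∀ n ω, U (n + 1) ω = U n ω + κ (Z n ω))
    (hdraw : ∀ n : ℕ, ∀ A : Set S, MeasurableSet A → ∀ B : Set Ω,
      MeasurableSet[⨆ k ∈ range n, MeasurableSpace.comap (Z k) inferInstance] B →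
      μ (B ∩ Z n ⁻¹' A) = ∫⁻ ω in B, U n ω A / (n + 1 : ℝ≥0∞) ∂μ)
    -- the associated Markov chain together with the independent times τ
    {Ω' : Type*} [MeasurableSpace Ω'] (μ' : Measure Ω') [IsProbabilityMeasure μ']
    (X : ℕ → Ω' → S) (hXmeas : ∀ m, Measurable (X m))
    (hX0 : μ'.map (X 0) = u0)
    (hmarkov : ∀ n : ℕ, ∀ A : Set S, MeasurableSet A → ∀ B : Set Ω',
      MeasurableSet[⨆ k ∈ range (n + 1), MeasurableSpace.comap (X k) inferInstance] B →
      μ' (B ∩ X (n + 1) ⁻¹' A) = ∫⁻ ω in B, κ (X n ω) A ∂μ')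
    (I : ℕ → Ω' → ℕ) (hImeas : ∀ j, Measurable (I j))
    (hI01 : ∀ j ω, I j ω = 0 ∨ I j ω = 1)
    (hber : ∀ j, μ' {ω | I j ω = 1} = ENNReal.ofReal (1 / (j + 2 : ℝ)))
    (hindep : iIndepFun I μ')
    (hIX : IndepFun (fun ω (m : ℕ) => X m ω) (fun ω (j : ℕ) => I j ω) μ')
    (τ : ℕ → Ω' → ℕ) (hτ : ∀ n ω, τ n ω = ∑ j ∈ range n, I j ω) :
    ∀ n : ℕ, μ.map (Z n) = μ'.map (fun ω => X (τ n ω) ω) := by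
  obtain rfl : τ = fun n ω => ∑ j ∈ range n, I j ω := funext fun n => funext (hτ n)
  have hτmeas : ∀ n, Measurable fun ω => ∑ j ∈ range n, I j ω := by fun_prop
  have hXτ : ∀ n k, IndepFun (X k) (fun ω => ∑ j ∈ range n, I j ω) μ' := fun n k =>
    hIX.comp (φ := fun x : ℕ → S => x k) (ψ := fun i : ℕ → ℕ => ∑ j ∈ range n, i j)
      (by fun_prop) (by fun_prop)
  have hchain : SatisfiesUrnRecursion κ fun n => μ'.map fun ω => X (∑ j ∈ range n, I j ω) ω := by
    simp_rw [map_eval_eq_comp_of_indepFun hXmeas (hτmeas _) (hXτ _)]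
    exact satisfiesUrnRecursion_comp
      (map_succ_eq_comp_map hXmeas fun k A hA => by simpa using hmarkov k A hA _ .univ)
      (smul_map_sum_range_succ hImeas hI01 hber hindep)
  have hurn : SatisfiesUrnRecursion κ fun n => μ.map (Z n) :=
    satisfiesUrnRecursion_map_draw hZmeas hUrec fun n A hA => by
      simpa using hdraw n A hA _ .univ
  have hZ0 : μ.map (Z 0) = u0 := by
    ext A hA
    simpa [Measure.map_apply (hZmeas 0) hA, hU0] using hdraw 0 A hA _ .univ
  exact congrFun (hurn.unique hchain (by simpa [hZ0] using hX0.symm))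

/-- Marginal Representation Theorem: For the balanced urn on a
measurable color space `S` with replacement (Markov) kernel `κ` and initial
probability distribution `u0` — so `U (n+1) ω = U n ω + κ (Z n ω)` and,
conditionally on the past, `Z n ∼ U n/(n+1)` — let `(X m)` be the Markov chain
with kernel `κ` and initial distribution `u0`, and let `τ n = ∑_{j<n} I j` be
the depth-minus-one of vertex `n` in an independent random recursive tree
(`I j` independent Bernoulli(1/(j+2)), independent of the chain).  Then for
every `n`, `Z n` has the same distribution as `X (τ n)`. -/
theorem marginal_representation
    {S : Type*} [MeasurableSpace S]
    (κ : Kernel S S) [IsMarkovKernel κ]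
    (u0 : Measure S) [IsProbabilityMeasure u0]
    -- the urn process
    {Ω : Type*} [MeasurableSpace Ω] (μ : Measure Ω) [IsProbabilityMeasure μ]
    (Z : ℕ → Ω → S) (hZmeas : ∀ n, Measurable (Z n))
    (U : ℕ → Ω → Measure S)
    (hU0 : ∀ ω, U 0 ω = u0)
    (hUrec : ∀ n ω, U (n + 1) ω = U n ω + κ (Z n ω))
    (hdraw : ∀ n : ℕ, ∀ A : Set S, MeasurableSet A → ∀ B : Set Ω,
      MeasurableSet[⨆ k ∈ range n, MeasurableSpace.comap (Z k) inferInstance] B →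
      μ (B ∩ Z n ⁻¹' A) = ∫⁻ ω in B, U n ω A / (n + 1 : ℝ≥0∞) ∂μ)
    -- the associated Markov chain together with the independent times τ
    {Ω' : Type*} [MeasurableSpace Ω'] (μ' : Measure Ω') [IsProbabilityMeasure μ']
    (X : ℕ → Ω' → S) (hXmeas : ∀ m, Measurable (X m))
    (hX0 : μ'.map (X 0) = u0)
    (hmarkov : ∀ n : ℕ, ∀ A : Set S, MeasurableSet A → ∀ B : Set Ω',
      MeasurableSet[⨆ k ∈ range (n + 1), MeasurableSpace.comap (X k) inferInstance] B →
      μ' (B ∩ X (n + 1) ⁻¹' A) = ∫⁻ ω in B, κ (X n ω) A ∂μ')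
    (I : ℕ → Ω' → ℕ) (hImeas : ∀ j, Measurable (I j))
    (hI01 : ∀ j ω, I j ω = 0 ∨ I j ω = 1)
    (hber : ∀ j, μ' {ω | I j ω = 1} = ENNReal.ofReal (1 / (j + 2 : ℝ)))
    (hindep : iIndepFun I μ')
    (hIX : IndepFun (fun ω (m : ℕ) => X m ω) (fun ω (j : ℕ) => I j ω) μ')
    (τ : ℕ → Ω' → ℕ) (hτ : ∀ n ω, τ n ω = ∑ j ∈ range n, I j ω) :
    ∀ n : ℕ, μ.map (Z n) = μ'.map (fun ω => X (τ n ω) ω) :=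
  marginal_representation_general κ u0 μ Z hZmeas U hU0 hUrec hdraw μ' X hXmeas hX0 hmarkov I hImeas
    hI01 hber hindep hIX τ hτ
end

section
/- The sequence of colors (Z_n)_{n≥0} drawn from a balanced urn with kernel R and initial distribution U_0 is equal in distribution to the branching Markov chain (W_n)_{n≥0} on the random recursive tree with root −1 started at an auxiliary state Δ, where each vertex n attaches uniformly to a random earlier vertex D_n and W_n is drawn from R̂(W_{D_n}, ·), with R̂(Δ, ·) = U_0 and R̂(s, ·) = R(s, ·) for s ∈ S. -/
open MeasureTheory ProbabilityTheory Filter Finset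
open scoped ENNReal

/-!
Both processes draw their `n`-th colour, given the first `n` colours `x`, from the same law
`(u0 + κ(x 0) + ⋯ + κ(x (n - 1))) / (n + 1)`. For the urn this is its normalised composition;
for the tree, `D n` is uniform on `{0, …, n}` and independent of the past, so averaging
`R̂(W (D n), ·)` over it gives exactly this average of `u0` and the `κ(W k, ·)`, `k < n`.
Processes with the same predictable conditional laws have, by induction on `n`, the same
finite-dimensional distributions, hence the same law on `ℕ → S`.
-/

section

variable {Ω Ω' S : Type*}

def initSeg (X : ℕ → Ω → S) (n : ℕ) (ω : Ω) : Fin n → S := fun k => X k ω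

lemma initSeg_succ_preimage_pi (X : ℕ → Ω → S) (n : ℕ) (t : Fin (n + 1) → Set S) :
    initSeg X (n + 1) ⁻¹' Set.univ.pi t
      = initSeg X n ⁻¹' Set.univ.pi (fun i => t i.castSucc) ∩ X n ⁻¹' t (Fin.last n) := by
  ext ω
  simp [initSeg, Fin.forall_fin_succ']

variable [MeasurableSpace S]

abbrev initSigma (X : ℕ → Ω → S) (n : ℕ) : MeasurableSpace Ω :=
  ⨆ k ∈ range n, MeasurableSpace.comap (X k) inferInstance

lemma measurable_initSeg_initSigma (X : ℕ → Ω → S) (n : ℕ) :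
    Measurable[initSigma X n] (initSeg X n) :=
  letI := initSigma X n
  measurable_pi_lambda _ fun k => Measurable.of_comap_le <|
    le_iSup₂ (f := fun k (_ : k ∈ range n) => MeasurableSpace.comap (X k) inferInstance) k
      (mem_range.2 k.2)

variable [MeasurableSpace Ω] [MeasurableSpace Ω']

lemma measurable_initSeg {X : ℕ → Ω → S} (hX : ∀ n, Measurable (X n)) (n : ℕ) :
    Measurable (initSeg X n) :=
  measurable_pi_lambda _ fun k => hX k

lemma map_eq_of_forall_map_initSeg_eq {μ : Measure Ω} {μ' : Measure Ω'} [IsFiniteMeasure μ]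
    {X : ℕ → Ω → S} {Y : ℕ → Ω' → S} (hX : ∀ n, Measurable (X n)) (hY : ∀ n, Measurable (Y n))
    (h : ∀ n, μ.map (initSeg X n) = μ'.map (initSeg Y n)) :
    μ.map (fun ω k => X k ω) = μ'.map (fun ω k => Y k ω) := by
  have hXY : ∀ I : Finset ℕ,
      μ.map (fun ω (i : I) => X i ω) = μ'.map (fun ω (i : I) => Y i ω) := by
    intro I
    have hI : ∀ i ∈ I, i < I.sup id + 1 := fun i hi => Nat.lt_succ_of_le (le_sup (f := id) hi)
    let r : (Fin (I.sup id + 1) → S) → (I → S) := fun x i => x ⟨i, hI i i.2⟩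
    have hr : Measurable r := measurable_pi_lambda _ fun i => measurable_pi_apply _
    calc μ.map (fun ω (i : I) => X i ω) = (μ.map (initSeg X _)).map r :=
          (Measure.map_map hr (measurable_initSeg hX _)).symm
      _ = (μ'.map (initSeg Y _)).map r := by rw [h]
      _ = μ'.map (fun ω (i : I) => Y i ω) := Measure.map_map hr (measurable_initSeg hY _)
  refine IsProjectiveLimit.unique (P := fun I => μ.map fun ω (i : I) => X i ω)
    (fun I => ?_) (fun I => ?_)
  · rw [Measure.map_map (measurable_restrict I) (measurable_pi_lambda _ hX)]
    rfl
  · rw [Measure.map_map (measurable_restrict I) (measurable_pi_lambda _ hY)]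
    exact (hXY I).symm

/-- Given `X 0, …, X (n - 1)`, the conditional law of `X n` is `Φ n (X 0, …, X (n - 1))`. -/
def HasPredictableLaw (μ : Measure Ω) (X : ℕ → Ω → S) (Φ : ∀ n, Kernel (Fin n → S) S) : Prop :=
  ∀ n (R : Set (Fin n → S)) (A : Set S), MeasurableSet R → MeasurableSet A →
    μ (initSeg X n ⁻¹' R ∩ X n ⁻¹' A) = ∫⁻ ω in initSeg X n ⁻¹' R, Φ n (initSeg X n ω) A ∂μ

lemma HasPredictableLaw.map_initSeg_eq {μ : Measure Ω} {μ' : Measure Ω'} [IsFiniteMeasure μ]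
    [IsFiniteMeasure μ'] {X : ℕ → Ω → S} {Y : ℕ → Ω' → S}
    {Φ : ∀ n, Kernel (Fin n → S) S} (hX : HasPredictableLaw μ X Φ)
    (hY : HasPredictableLaw μ' Y Φ) (hXm : ∀ n, Measurable (X n))
    (hYm : ∀ n, Measurable (Y n)) (huniv : μ Set.univ = μ' Set.univ) :
    ∀ n, μ.map (initSeg X n) = μ'.map (initSeg Y n)
  | 0 => by
    ext s hs
    rcases s.eq_empty_or_nonempty with rfl | hne
    · simp
    · rw [hne.eq_univ, Measure.map_apply (measurable_initSeg hXm 0) .univ,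
        Measure.map_apply (measurable_initSeg hYm 0) .univ]
      exact huniv
  | n + 1 => by
    have ih := hX.map_initSeg_eq hY hXm hYm huniv n
    refine ext_of_generate_finite _ generateFrom_pi.symm isPiSystem_pi ?_ ?_
    · rintro _ ⟨t, ht, rfl⟩
      have ht : ∀ i, MeasurableSet (t i) := fun i => ht i trivial
      have hR : MeasurableSet (Set.univ.pi fun i : Fin n => t i.castSucc) :=
        .univ_pi fun i => ht _
      rw [Measure.map_apply (measurable_initSeg hXm _) (.univ_pi ht),
        Measure.map_apply (measurable_initSeg hYm _) (.univ_pi ht),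
        initSeg_succ_preimage_pi, initSeg_succ_preimage_pi, hX n _ _ hR (ht _),
        hY n _ _ hR (ht _),
        ← setLIntegral_map hR ((Φ n).measurable_coe (ht _)) (measurable_initSeg hXm n),
        ← setLIntegral_map hR ((Φ n).measurable_coe (ht _)) (measurable_initSeg hYm n), ih]
    · rw [Measure.map_apply (measurable_initSeg hXm _) .univ,
        Measure.map_apply (measurable_initSeg hYm _) .univ]
      exact huniv

end

lemma setLIntegral_indicator_of_indep {Ω : Type*} {mΩ : MeasurableSpace Ω} {μ : Measure Ω}
    {m₁ m₂ : MeasurableSpace Ω} (h₁ : m₁ ≤ mΩ) (h₂ : m₂ ≤ mΩ) (hind : Indep m₁ m₂ μ)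
    {t B : Set Ω} (ht : MeasurableSet[m₁] t) (hB : MeasurableSet[m₂] B) {f : Ω → ℝ≥0∞}
    (hf : Measurable[m₂] f) :
    ∫⁻ ω in B, t.indicator f ω ∂μ = μ t * ∫⁻ ω in B, f ω ∂μ := by
  calc ∫⁻ ω in B, t.indicator f ω ∂μ
      = ∫⁻ ω, t.indicator 1 ω * B.indicator f ω ∂μ := by
        rw [← lintegral_indicator (h₂ _ hB)]
        congr 1 with ω
        by_cases hωt : ω ∈ t <;> by_cases hωB : ω ∈ B <;> simp [hωt, hωB]
    _ = (∫⁻ ω, t.indicator 1 ω ∂μ) * ∫⁻ ω, B.indicator f ω ∂μ :=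
        lintegral_mul_eq_lintegral_mul_lintegral_of_independent_measurableSpace h₁ h₂ hind
          (measurable_const.indicator ht) (hf.indicator hB)
    _ = μ t * ∫⁻ ω in B, f ω ∂μ := by
        rw [lintegral_indicator_one (h₁ _ ht), lintegral_indicator (h₂ _ hB)]

lemma setLIntegral_comp_of_indep_uniform {Ω : Type*} {mΩ : MeasurableSpace Ω} {μ : Measure Ω}
    {D : Ω → ℕ} (hD : Measurable D) {m : MeasurableSpace Ω} (hm : m ≤ mΩ)
    (hind : Indep (MeasurableSpace.comap D inferInstance) m μ) {n : ℕ} (hrange : ∀ ω, D ω ≤ n)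
    {c : ℝ≥0∞} (hunif : ∀ j ≤ n, μ (D ⁻¹' {j}) = c) {f : ℕ → Ω → ℝ≥0∞}
    (hf : ∀ j ≤ n, Measurable[m] (f j)) {B : Set Ω} (hB : MeasurableSet[m] B) :
    ∫⁻ ω in B, f (D ω) ω ∂μ = c * ∑ j ∈ range (n + 1), ∫⁻ ω in B, f j ω ∂μ := by
  have hsplit : (fun ω => f (D ω) ω)
      = fun ω => ∑ j ∈ range (n + 1), (D ⁻¹' {j}).indicator (f j) ω := by
    ext ω
    rw [Finset.sum_eq_single_of_mem (D ω) (mem_range.2 (Nat.lt_succ_of_le (hrange ω)))]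
    · simp
    · intro j _ hj
      simp [Ne.symm hj]
  rw [hsplit, lintegral_finsetSum _ fun j hj =>
    ((hf j (Nat.lt_succ_iff.1 (mem_range.1 hj))).mono hm le_rfl).indicator
      (hD (measurableSet_singleton j)), mul_sum]
  refine sum_congr rfl fun j hj => ?_
  have hj : j ≤ n := Nat.lt_succ_iff.1 (mem_range.1 hj)
  rw [setLIntegral_indicator_of_indep hD.comap_le hm hind ⟨{j}, measurableSet_singleton j, rfl⟩
    hB (hf j hj), hunif j hj]

section

variable {Ω Ω' S : Type*} [MeasurableSpace S]

/-- The paper's `U n / (n + 1)`, as a function of the first `n` colours drawn. -/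
noncomputable def urnKernel (u0 : Measure S) (κ : Kernel S S) (n : ℕ) :
    Kernel (Fin n → S) S where
  toFun x := ((n : ℝ≥0∞) + 1)⁻¹ • (u0 + ∑ k, κ (x k))
  measurable' := Measure.measurable_of_measurable_coe _ fun A hA => by
    simp only [Measure.smul_apply, Measure.add_apply, Measure.coe_finsetSum, Finset.sum_apply,
      smul_eq_mul]
    exact (measurable_const.add (Finset.measurable_sum _ fun k _ =>
      (κ.measurable_coe hA).comp (measurable_pi_apply k))).const_mul _

lemma urnKernel_apply (u0 : Measure S) (κ : Kernel S S) (n : ℕ) (x : Fin n → S) (A : Set S) :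
    urnKernel u0 κ n x A = ((n : ℝ≥0∞) + 1)⁻¹ * (u0 A + ∑ k, κ (x k) A) := by
  simp [urnKernel, mul_add]

variable {u0 : Measure S} {κ : Kernel S S}

lemma urn_eq_add_sum {Z : ℕ → Ω → S} {U : ℕ → Ω → Measure S} (hU0 : ∀ ω, U 0 ω = u0)
    (hUrec : ∀ n ω, U (n + 1) ω = U n ω + κ (Z n ω)) (n : ℕ) (ω : Ω) :
    U n ω = u0 + ∑ k ∈ range n, κ (Z k ω) := by
  induction n with
  | zero => simp [hU0]
  | succ n ih => rw [hUrec, ih, sum_range_succ, add_assoc]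

lemma hasPredictableLaw_urn [MeasurableSpace Ω] {μ : Measure Ω} {Z : ℕ → Ω → S}
    {U : ℕ → Ω → Measure S} (hU0 : ∀ ω, U 0 ω = u0)
    (hUrec : ∀ n ω, U (n + 1) ω = U n ω + κ (Z n ω))
    (hdraw : ∀ n : ℕ, ∀ A : Set S, MeasurableSet A → ∀ B : Set Ω,
      MeasurableSet[initSigma Z n] B →
      μ (B ∩ Z n ⁻¹' A) = ∫⁻ ω in B, U n ω A / (n + 1 : ℝ≥0∞) ∂μ) :
    HasPredictableLaw μ Z (urnKernel u0 κ) := by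
  intro n R A hR hA
  rw [hdraw n A hA _ (measurable_initSeg_initSigma Z n hR)]
  congr 1 with ω
  rw [urnKernel_apply, urn_eq_add_sum hU0 hUrec, div_eq_mul_inv, mul_comm, Measure.add_apply,
    Measure.coe_finsetSum, Finset.sum_apply, ← Fin.sum_univ_eq_sum_range]
  rfl

lemma hasPredictableLaw_tree [MeasurableSpace Ω'] {μ' : Measure Ω'} {W : ℕ → Ω' → S}
    (hWmeas : ∀ n, Measurable (W n)) {D : ℕ → Ω' → ℕ} (hDmeas : ∀ n, Measurable (D n))
    (hDrange : ∀ n ω, D n ω ≤ n)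
    (hDunif : ∀ n : ℕ, ∀ k ≤ n, μ' {ω | D n ω = k} = ((n : ℝ≥0∞) + 1)⁻¹)
    (hDindep : ∀ n : ℕ,
      Indep (MeasurableSpace.comap (D n) inferInstance) (initSigma W n ⊔ initSigma D n) μ')
    (hWdraw : ∀ n : ℕ, ∀ A : Set S, MeasurableSet A → ∀ B : Set Ω',
      MeasurableSet[initSigma W n ⊔ initSigma D (n + 1)] B →
      μ' (B ∩ W n ⁻¹' A)
        = ∫⁻ ω in B, (if D n ω = 0 then u0 A else κ (W (D n ω - 1) ω) A) ∂μ') :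
    HasPredictableLaw μ' W (urnKernel u0 κ) := by
  intro n R A hR hA
  have hpast : initSigma W n ⊔ initSigma D n ≤ ‹MeasurableSpace Ω'› :=
    sup_le (iSup₂_le fun k _ => (hWmeas k).comap_le) (iSup₂_le fun k _ => (hDmeas k).comap_le)
  have hinit : Measurable[initSigma W n ⊔ initSigma D n] (initSeg W n) :=
    (measurable_initSeg_initSigma W n).mono le_sup_left le_rfl
  have hB : MeasurableSet[initSigma W n ⊔ initSigma D n] (initSeg W n ⁻¹' R) := hinit hR
  have hf : ∀ j ≤ n, Measurable[initSigma W n ⊔ initSigma D n]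
      fun ω => if j = 0 then u0 A else κ (W (j - 1) ω) A := by
    intro j hj
    rcases j with _ | i
    · exact measurable_const
    · exact (κ.measurable_coe hA).comp ((measurable_pi_apply (⟨i, hj⟩ : Fin n)).comp hinit)
  rw [hWdraw n A hA _ ((measurable_initSeg_initSigma W n).mono le_sup_left le_rfl hR),
    setLIntegral_comp_of_indep_uniform
      (f := fun j ω => if j = 0 then u0 A else κ (W (j - 1) ω) A) (hDmeas n) hpast
      (hDindep n) (hDrange n) (hDunif n) hf hB, sum_range_succ']
  simp only [urnKernel_apply, initSeg, Nat.add_one_ne_zero, ↓reduceIte, Nat.add_sub_cancel]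
  have hκW : ∀ k, Measurable fun ω => κ (W k ω) A :=
    fun k => (κ.measurable_coe hA).comp (hWmeas k)
  rw [lintegral_const_mul' _ _ (by simp), lintegral_add_left measurable_const,
    lintegral_finsetSum _ fun k _ => hκW _,
    Fin.sum_univ_eq_sum_range (fun k => ∫⁻ ω in initSeg W n ⁻¹' R, κ (W k ω) A ∂μ'),
    add_comm (∑ _ ∈ _, _)]

end

theorem grand_representation_general
    {S : Type*} [MeasurableSpace S]
    (κ : Kernel S S)
    (u0 : Measure S)
    -- the urn process
    {Ω : Type*} [MeasurableSpace Ω] (μ : Measure Ω) [IsProbabilityMeasure μ]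
    (Z : ℕ → Ω → S) (hZmeas : ∀ n, Measurable (Z n))
    (U : ℕ → Ω → Measure S)
    (hU0 : ∀ ω, U 0 ω = u0)
    (hUrec : ∀ n ω, U (n + 1) ω = U n ω + κ (Z n ω))
    (hdraw : ∀ n : ℕ, ∀ A : Set S, MeasurableSet A → ∀ B : Set Ω,
      MeasurableSet[⨆ k ∈ range n, MeasurableSpace.comap (Z k) inferInstance] B →
      μ (B ∩ Z n ⁻¹' A) = ∫⁻ ω in B, U n ω A / (n + 1 : ℝ≥0∞) ∂μ)
    -- the branching Markov chain on the random recursive tree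
    {Ω' : Type*} [MeasurableSpace Ω'] (μ' : Measure Ω') [IsProbabilityMeasure μ']
    (W : ℕ → Ω' → S) (hWmeas : ∀ n, Measurable (W n))
    (D : ℕ → Ω' → ℕ) (hDmeas : ∀ n, Measurable (D n))
    (hDrange : ∀ n ω, D n ω ≤ n)
    (hDunif : ∀ n : ℕ, ∀ k ≤ n,
      μ' {ω | D n ω = k} = ENNReal.ofReal (1 / (n + 1 : ℝ)))
    (hDindep : ∀ n : ℕ,
      Indep (MeasurableSpace.comap (D n) inferInstance)
        ((⨆ k ∈ range n, MeasurableSpace.comap (W k) inferInstance) ⊔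
          (⨆ k ∈ range n, MeasurableSpace.comap (D k) inferInstance)) μ')
    (hWdraw : ∀ n : ℕ, ∀ A : Set S, MeasurableSet A → ∀ B : Set Ω',
      MeasurableSet[(⨆ k ∈ range n, MeasurableSpace.comap (W k) inferInstance) ⊔
        (⨆ k ∈ range (n + 1), MeasurableSpace.comap (D k) inferInstance)] B →
      μ' (B ∩ W n ⁻¹' A)
        = ∫⁻ ω in B,
            (if D n ω = 0 then u0 A else κ (W (D n ω - 1) ω) A) ∂μ') :
    μ.map (fun ω (k : ℕ) => Z k ω) = μ'.map (fun ω (k : ℕ) => W k ω) := by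
  have hDunif' : ∀ n : ℕ, ∀ k ≤ n, μ' {ω | D n ω = k} = ((n : ℝ≥0∞) + 1)⁻¹ := by
    intro n k hk
    rw [hDunif n k hk, one_div, ENNReal.ofReal_inv_of_pos (by positivity),
      ENNReal.ofReal_add (by positivity) zero_le_one, ENNReal.ofReal_natCast, ENNReal.ofReal_one]
  have hZ : HasPredictableLaw μ Z (urnKernel u0 κ) := hasPredictableLaw_urn hU0 hUrec hdraw
  have hW : HasPredictableLaw μ' W (urnKernel u0 κ) :=
    hasPredictableLaw_tree hWmeas hDmeas hDrange hDunif' hDindep hWdraw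
  exact map_eq_of_forall_map_initSeg_eq hZmeas hWmeas
    (hZ.map_initSeg_eq hW hZmeas hWmeas (by simp))

/-- Grand Representation Theorem: The full sequence of colors
`(Z n)` of the balanced urn with kernel `κ` and initial distribution `u0`
equals in distribution the branching Markov chain `(W n)` on the random
recursive tree rooted at an auxiliary vertex (the root carrying the state `Δ`):
vertex `n` attaches to the uniformly chosen earlier vertex `D n` (coded so that
`D n = 0` is the root `-1` and `D n = k+1` is vertex `k`, `k ≤ n-1`),
independently of the past, and `W n` is drawn from `R̂(W (D n), ·)`, where
`R̂(Δ,·) = u0` and `R̂(s,·) = κ(s,·)` for `s ∈ S`. -/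
theorem grand_representation
    {S : Type*} [MeasurableSpace S]
    (κ : Kernel S S) [IsMarkovKernel κ]
    (u0 : Measure S) [IsProbabilityMeasure u0]
    -- the urn process
    {Ω : Type*} [MeasurableSpace Ω] (μ : Measure Ω) [IsProbabilityMeasure μ]
    (Z : ℕ → Ω → S) (hZmeas : ∀ n, Measurable (Z n))
    (U : ℕ → Ω → Measure S)
    (hU0 : ∀ ω, U 0 ω = u0)
    (hUrec : ∀ n ω, U (n + 1) ω = U n ω + κ (Z n ω))
    (hdraw : ∀ n : ℕ, ∀ A : Set S, MeasurableSet A → ∀ B : Set Ω,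
      MeasurableSet[⨆ k ∈ range n, MeasurableSpace.comap (Z k) inferInstance] B →
      μ (B ∩ Z n ⁻¹' A) = ∫⁻ ω in B, U n ω A / (n + 1 : ℝ≥0∞) ∂μ)
    -- the branching Markov chain on the random recursive tree
    {Ω' : Type*} [MeasurableSpace Ω'] (μ' : Measure Ω') [IsProbabilityMeasure μ']
    (W : ℕ → Ω' → S) (hWmeas : ∀ n, Measurable (W n))
    (D : ℕ → Ω' → ℕ) (hDmeas : ∀ n, Measurable (D n))
    (hDrange : ∀ n ω, D n ω ≤ n)
    (hDunif : ∀ n : ℕ, ∀ k ≤ n,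
      μ' {ω | D n ω = k} = ENNReal.ofReal (1 / (n + 1 : ℝ)))
    (hDindep : ∀ n : ℕ,
      Indep (MeasurableSpace.comap (D n) inferInstance)
        ((⨆ k ∈ range n, MeasurableSpace.comap (W k) inferInstance) ⊔
          (⨆ k ∈ range n, MeasurableSpace.comap (D k) inferInstance)) μ')
    (hWdraw : ∀ n : ℕ, ∀ A : Set S, MeasurableSet A → ∀ B : Set Ω',
      MeasurableSet[(⨆ k ∈ range n, MeasurableSpace.comap (W k) inferInstance) ⊔
        (⨆ k ∈ range (n + 1), MeasurableSpace.comap (D k) inferInstance)] B →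
      μ' (B ∩ W n ⁻¹' A)
        = ∫⁻ ω in B,
            (if D n ω = 0 then u0 A else κ (W (D n ω - 1) ω) A) ∂μ') :
    μ.map (fun ω (k : ℕ) => Z k ω) = μ'.map (fun ω (k : ℕ) => W k ω) :=
  grand_representation_general κ u0 μ Z hZmeas U hU0 hUrec hdraw μ' W hWmeas D hDmeas hDrange hDunif
    hDindep hWdraw
end
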